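/- With T defined by T_1(δ_l, l) = w(l), T_1(κ, t) = 0 otherwise, and T_{h+1}(κ, l) = Σ_{t : (κ−δ_l)(t) ≥ 1} T_h(κ − δ_l, t) · w(l) · r̃(t)(l) · ∏_{i} r(i)(l)^{(κ−δ_l−δ_t)(i)} for κ(l) ≥ 1 (0 when κ(l)=0), for every n ≥ 1 the double sum Σ_{κ : Σκ = n} Σ_{t ∈ Fin p} T_n(κ, t) equals Σ_{c : Fin n → Fin p} W¹_n(c). -/

import Mathlib

open Finset

/-- The cell configuration of a cell assignment. -/
def cellConfig {p n : ℕ} (c : Fin n → Fin p) : Fin p → ℕ :=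
  fun i => (Finset.univ.filter (fun a => c a = i)).card

/-- The indicator vector `δ_l`. -/
def delta {p : ℕ} (l : Fin p) : Fin p → ℕ := fun i => if i = l then 1 else 0

/-- The predecessor weight `W¹` of a cell assignment. -/
def predW {R : Type*} [CommRing R] {p n : ℕ} (w : Fin p → R)
    (r : Fin p → Fin p → R) (rt : Fin p → Fin p → R) (c : Fin n → Fin p) : R :=
  (∏ a, w (c a)) *
    (∏ a : Fin n, ∏ b ∈ Finset.univ.filter
        (fun b : Fin n => (a : ℕ) < (b : ℕ) ∧ (b : ℕ) ≠ (a : ℕ) + 1),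
      r (c a) (c b)) *
    ∏ a : Fin n, ∏ b ∈ Finset.univ.filter (fun b : Fin n => (b : ℕ) = (a : ℕ) + 1),
      rt (c a) (c b)

/-- The dynamic-programming table for the immediate-predecessor relation. -/
def T1 {R : Type*} [CommRing R] {p : ℕ} (w : Fin p → R) (r : Fin p → Fin p → R)
    (rt : Fin p → Fin p → R) : ℕ → (Fin p → ℕ) → Fin p → R
  | 0, _, _ => 0
  | 1, κ, t => if κ = delta t then w t else 0
  | h + 2, κ, l =>
      if 1 ≤ κ l then
        ∑ t ∈ Finset.univ.filter (fun t : Fin p => 1 ≤ (κ - delta l) t),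
          T1 w r rt (h + 1) (κ - delta l) t * w l * rt t l *
            ∏ i, r i l ^ ((κ - delta l - delta t) i)
      else 0

/-!
`T1 w r rt (k + 1) κ t` is the sum of `W¹` over the assignments `c : Fin (k + 1) → Fin p` with
configuration `κ` and last cell `t`. Indeed, appending a cell `l` to `c` multiplies `W¹` by `w l`,
by `r̃ (c last) l`, and by `r i l` once for every earlier position in cell `i` other than the last
one; there are `(config c - δ_{c last}) i` of those. Summing over `t` and then over all
configurations of total size `n` gives the sum over all assignments.
-/

lemma prod_prod_filter_snoc {α M : Type*} [CommMonoid M] {m : ℕ} (P : ℕ → ℕ → Prop)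
    [DecidableRel P] (f : α → α → M) (c : Fin m → α) (x : α) :
    ∏ a : Fin (m + 1), ∏ b ∈ univ.filter (fun b : Fin (m + 1) => P a b),
        f ((Fin.snoc c x : Fin (m + 1) → α) a) ((Fin.snoc c x : Fin (m + 1) → α) b) =
      (∏ a : Fin m, ∏ b ∈ univ.filter (fun b : Fin m => P a b), f (c a) (c b)) *
      (∏ a : Fin m, if P a m then f (c a) x else 1) *
      (∏ b : Fin m, if P m b then f x (c b) else 1) *
      (if P m m then f x x else 1) := by
  simp only [prod_filter, Fin.prod_univ_castSucc, Fin.val_castSucc, Fin.val_last,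
    Fin.snoc_castSucc, Fin.snoc_last, prod_mul_distrib]
  ac_rfl

lemma prod_nonadjacent_snoc {α M : Type*} [CommMonoid M] {k : ℕ} (f : α → α → M)
    (c : Fin (k + 1) → α) (x : α) :
    ∏ a : Fin (k + 2), ∏ b ∈ univ.filter
        (fun b : Fin (k + 2) => (a : ℕ) < (b : ℕ) ∧ (b : ℕ) ≠ (a : ℕ) + 1),
        f ((Fin.snoc c x : Fin (k + 2) → α) a) ((Fin.snoc c x : Fin (k + 2) → α) b) =
      (∏ a : Fin (k + 1), ∏ b ∈ univ.filter
        (fun b : Fin (k + 1) => (a : ℕ) < (b : ℕ) ∧ (b : ℕ) ≠ (a : ℕ) + 1), f (c a) (c b)) *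
      ∏ a : Fin k, f (Fin.init c a) x := by
  have hto_last (a : Fin (k + 1)) : (a : ℕ) < k + 1 ∧ k + 1 ≠ a + 1 ↔ a ≠ Fin.last k := by
    simp [Fin.ext_iff, a.is_lt, eq_comm]
  have hfrom_last (b : Fin (k + 1)) : ¬ (k + 1 < (b : ℕ) ∧ (b : ℕ) ≠ k + 1 + 1) := by omega
  rw [prod_prod_filter_snoc (fun x y => x < y ∧ y ≠ x + 1)]
  simp only [hto_last, hfrom_last, lt_irrefl, false_and, if_false, prod_const_one, mul_one]
  congr 1
  rw [Fin.prod_univ_castSucc]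
  simp [Fin.init, Fin.castSucc_ne_last]

lemma prod_adjacent_snoc {α M : Type*} [CommMonoid M] {k : ℕ} (f : α → α → M)
    (c : Fin (k + 1) → α) (x : α) :
    ∏ a : Fin (k + 2), ∏ b ∈ univ.filter (fun b : Fin (k + 2) => (b : ℕ) = (a : ℕ) + 1),
        f ((Fin.snoc c x : Fin (k + 2) → α) a) ((Fin.snoc c x : Fin (k + 2) → α) b) =
      (∏ a : Fin (k + 1), ∏ b ∈ univ.filter (fun b : Fin (k + 1) => (b : ℕ) = (a : ℕ) + 1),
        f (c a) (c b)) * f (c (Fin.last k)) x := by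
  have hto_last (a : Fin (k + 1)) : k + 1 = (a : ℕ) + 1 ↔ Fin.last k = a := by
    simp [Fin.ext_iff, eq_comm]
  have hfrom_last (b : Fin (k + 1)) : (b : ℕ) ≠ k + 1 + 1 := by omega
  rw [prod_prod_filter_snoc (fun x y => y = x + 1)]
  simp only [hto_last, hfrom_last, if_false, prod_const_one, mul_one, prod_ite_eq, mem_univ,
    if_true, Nat.ne_add_one]

lemma sum_filter_last_eq_sum_snoc {α M : Type*} [Fintype α] [DecidableEq α] [AddCommMonoid M]
    {k : ℕ} (P : (Fin (k + 1) → α) → Prop) [DecidablePred P] (f : (Fin (k + 1) → α) → M)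
    (x : α) :
    ∑ c ∈ univ.filter (fun c => P c ∧ c (Fin.last k) = x), f c =
      ∑ c ∈ univ.filter (fun c : Fin k → α => P (Fin.snoc c x)), f (Fin.snoc c x) := by
  symm
  refine sum_nbij' (fun c => Fin.snoc c x) Fin.init ?_ ?_ ?_ ?_ (fun _ _ => rfl)
  · simp
  · intro c hc
    simp only [mem_filter, mem_univ, true_and] at hc ⊢
    rw [← hc.2, Fin.snoc_init_self]
    exact hc.1
  · simp
  · intro c hc
    rw [← (mem_filter.1 hc).2.2, Fin.snoc_init_self]

section

variable {R : Type*} [CommRing R] {p : ℕ} (w : Fin p → R) (r rt : Fin p → Fin p → R)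

lemma cellConfig_snoc {n : ℕ} (c : Fin n → Fin p) (l : Fin p) :
    cellConfig (Fin.snoc c l) = cellConfig c + delta l := by
  funext i
  simp only [cellConfig, Pi.add_apply, delta, card_filter, Fin.sum_univ_castSucc,
    Fin.snoc_castSucc, Fin.snoc_last, eq_comm (a := l)]

lemma cellConfig_init {n : ℕ} (c : Fin (n + 1) → Fin p) :
    cellConfig (Fin.init c) = cellConfig c - delta (c (Fin.last n)) := by
  have h := cellConfig_snoc (Fin.init c) (c (Fin.last n))
  rw [Fin.snoc_init_self] at h
  rw [h, add_tsub_cancel_right]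

lemma one_le_cellConfig_apply {n : ℕ} (c : Fin n → Fin p) (a : Fin n) :
    1 ≤ cellConfig c (c a) :=
  card_pos.mpr ⟨a, by simp⟩

lemma sum_cellConfig {n : ℕ} (c : Fin n → Fin p) : ∑ i, cellConfig c i = n := by
  simpa [cellConfig] using
    (card_eq_sum_card_fiberwise (s := univ) (fun a _ => mem_univ (c a))).symm

lemma delta_le_iff {l : Fin p} {κ : Fin p → ℕ} : delta l ≤ κ ↔ 1 ≤ κ l := by
  refine ⟨fun h => by simpa [delta] using h l, fun h i => ?_⟩
  by_cases hi : i = l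
  · subst hi; simpa [delta] using h
  · simp [delta, hi]

lemma prod_comp_eq_prod_pow_cellConfig {M : Type*} [CommMonoid M] {n : ℕ} (f : Fin p → M)
    (c : Fin n → Fin p) : ∏ a, f (c a) = ∏ i, f i ^ cellConfig c i := by
  simp_rw [← prod_fiberwise' univ c f, prod_const]
  rfl

lemma predW_snoc {k : ℕ} (c : Fin (k + 1) → Fin p) (l : Fin p) :
    predW w r rt (Fin.snoc c l : Fin (k + 2) → Fin p) =
      predW w r rt c * w l * rt (c (Fin.last k)) l *
        ∏ i, r i l ^ (cellConfig c - delta (c (Fin.last k))) i := by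
  have hw : ∏ a, w ((Fin.snoc c l : Fin (k + 2) → Fin p) a) = (∏ a, w (c a)) * w l := by
    simp [Fin.prod_univ_castSucc]
  rw [predW, predW, hw, prod_nonadjacent_snoc, prod_adjacent_snoc,
    prod_comp_eq_prod_pow_cellConfig (fun i => r i l), cellConfig_init]
  ring

def predWSum (k : ℕ) (κ : Fin p → ℕ) (t : Fin p) : R :=
  ∑ c ∈ univ.filter (fun c : Fin (k + 1) → Fin p => cellConfig c = κ ∧ c (Fin.last k) = t),
    predW w r rt c

lemma predWSum_zero (κ : Fin p → ℕ) (t : Fin p) :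
    predWSum w r rt 0 κ t = if κ = delta t then w t else 0 := by
  rw [predWSum, sum_filter_last_eq_sum_snoc]
  have hconfig (c : Fin 0 → Fin p) : cellConfig c = 0 := by
    funext i
    simp [cellConfig]
  have hconst (c : Fin 0 → Fin p) : (Fin.snoc c t : Fin 1 → Fin p) = fun _ => t := by
    funext a
    rw [Fin.fin_one_eq_zero a]
    rfl
  simp only [cellConfig_snoc, hconfig, zero_add, eq_comm (b := κ)]
  split_ifs with h <;> simp [h, hconst, predW]

lemma predWSum_succ (k : ℕ) (κ : Fin p → ℕ) (l : Fin p) :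
    predWSum w r rt (k + 1) κ l =
      if 1 ≤ κ l then
        ∑ t ∈ univ.filter (fun t : Fin p => 1 ≤ (κ - delta l) t),
          predWSum w r rt k (κ - delta l) t * w l * rt t l *
            ∏ i, r i l ^ ((κ - delta l - delta t) i)
      else 0 := by
  rw [predWSum, sum_filter_last_eq_sum_snoc]
  simp only [cellConfig_snoc, predW_snoc]
  split_ifs with hl
  · have hiff (c : Fin (k + 1) → Fin p) :
        cellConfig c + delta l = κ ↔ cellConfig c = κ - delta l := by
      rw [eq_comm, ← tsub_eq_iff_eq_add_of_le (delta_le_iff.2 hl), eq_comm]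
    rw [filter_congr (fun c _ => hiff c)]
    symm
    calc _ = ∑ t ∈ univ.filter (fun t : Fin p => 1 ≤ (κ - delta l) t),
          ∑ c ∈ (univ.filter (fun c : Fin (k + 1) → Fin p => cellConfig c = κ - delta l)).filter
              (fun c => c (Fin.last k) = t),
            predW w r rt c * w l * rt (c (Fin.last k)) l *
              ∏ i, r i l ^ (cellConfig c - delta (c (Fin.last k))) i := by
          refine sum_congr rfl fun t _ => ?_
          rw [predWSum, ← filter_filter, sum_mul, sum_mul, sum_mul]
          refine sum_congr rfl fun c hc => ?_
          simp only [mem_filter, mem_univ, true_and] at hc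
          rw [hc.1, hc.2]
      _ = _ := by
          -- the restriction `1 ≤ (κ - δ_l) t` in `T1` loses nothing: the last cell occurs in `c`
          refine sum_fiberwise_of_maps_to (fun c hc => ?_) _
          rw [mem_filter, ← (mem_filter.1 hc).2]
          exact ⟨mem_univ _, one_le_cellConfig_apply c _⟩
  · refine sum_eq_zero fun c hc => absurd ?_ hl
    rw [← (mem_filter.1 hc).2]
    simp [delta]

lemma T1_succ_eq_predWSum (k : ℕ) (κ : Fin p → ℕ) (t : Fin p) :
    T1 w r rt (k + 1) κ t = predWSum w r rt k κ t := by
  induction k generalizing κ t with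
  | zero => rw [predWSum_zero]; rfl
  | succ k ih => rw [predWSum_succ, T1]; simp only [ih]

lemma sum_sum_predWSum (k : ℕ) :
    ∑ κ ∈ Finset.Nat.antidiagonalTuple p (k + 1), ∑ t, predWSum w r rt k κ t =
      ∑ c : Fin (k + 1) → Fin p, predW w r rt c := by
  simp only [predWSum, ← filter_filter, sum_fiberwise]
  refine sum_fiberwise_of_maps_to (fun c _ => ?_) _
  rw [Finset.Nat.mem_antidiagonalTuple, sum_cellConfig]

end

theorem stmt9_general {R : Type*} [CommRing R] {p : ℕ}
    (w : Fin p → R) (r : Fin p → Fin p → R) (rt : Fin p → Fin p → R)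
    (n : ℕ) (hn : 1 ≤ n) :
    ∑ κ ∈ Finset.Nat.antidiagonalTuple p n, ∑ t : Fin p, T1 w r rt n κ t =
      ∑ c : Fin n → Fin p, predW w r rt c := by
  obtain ⟨k, rfl⟩ : ∃ k, n = k + 1 := ⟨n - 1, by omega⟩
  simp only [T1_succ_eq_predWSum, sum_sum_predWSum]

theorem stmt9 {R : Type*} [CommRing R] {p : ℕ} (hp : 1 ≤ p)
    (w : Fin p → R) (r : Fin p → Fin p → R) (rt : Fin p → Fin p → R)
    (n : ℕ) (hn : 1 ≤ n) :
    ∑ κ ∈ Finset.Nat.antidiagonalTuple p n, ∑ t : Fin p, T1 w r rt n κ t =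
      ∑ c : Fin n → Fin p, predW w r rt c :=
  stmt9_general w r rt n hn
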